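/- Let ρ be a density matrix on ℂ^d, let V be a d×d unitary matrix, and let {P_n}_{n∈F} be a finite family of positive semidefinite d×d matrices satisfying ∑_n P_n² = 1. Set σ = V ρ V†, p_n = tr(P_n σ P_n), and for p_n > 0 set σ⁽ⁿ⁾ = P_n σ P_n / p_n. Then H(p) + ∑_{n : p_n > 0} p_n S(σ⁽ⁿ⁾) − S(ρ) ≥ 0. (This is the positivity of the average entropy production Σ^ctrl of a control operation consisting of a unitary interaction followed by a measurement.) -/

import Mathlib

open Matrix
open scoped BigOperators Classical ComplexOrder

/-- Von Neumann entropy of a matrix: `-∑ λᵢ log λᵢ` over its eigenvalues if it is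
Hermitian, and `0` otherwise (junk value). -/
noncomputable def vnEntropy {n : Type*} [Fintype n] [DecidableEq n]
    (A : Matrix n n ℂ) : ℝ :=
  if hA : A.IsHermitian then ∑ i, Real.negMulLog (hA.eigenvalues i) else 0

/-- Shannon entropy of a (probability) vector. -/
noncomputable def shannonEntropy {F : Type*} [Fintype F] (p : F → ℝ) : ℝ :=
  ∑ n, Real.negMulLog (p n)

/-!
With `K n = P n * V` one has `∑ (K n)ᴴ * K n = 1 = ∑ K n * (K n)ᴴ` and
`K n * ρ * (K n)ᴴ = P n * σ * P n`. In eigenbases `e` of `ρ` and `w n` of these matrices, the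
weights `c (n, j) k = |⟪w n j, K n e k⟫|²` have column sums `1` and row sums `≤ 1`, and they map
the spectrum of `ρ` onto the spectra of the `P n * σ * P n`. Concavity of `x ↦ -x log x` then
gives `S(ρ) ≤ ∑ₙ S(P n * σ * P n)`, and the grouping identity `S(p • τ) = -p log p + p S(τ)`
for `tr τ = 1` turns the right-hand side into `H(p) + ∑ₙ pₙ S(σ⁽ⁿ⁾)`.
-/

namespace Real

/-- The missing mass `1 - ∑ c i` is placed at `0`, where `negMulLog` vanishes. -/
theorem sum_mul_negMulLog_le_negMulLog_sum {ι : Type*} [Fintype ι] {c s : ι → ℝ}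
    (hc : ∀ i, 0 ≤ c i) (hs : ∀ i, 0 ≤ s i) (hsum : ∑ i, c i ≤ 1) :
    ∑ i, c i * negMulLog (s i) ≤ negMulLog (∑ i, c i * s i) := by
  simpa using concaveOn_negMulLog.map_add_sum_le (t := Finset.univ) (w := c) (p := s)
    (v := 1 - ∑ i, c i) (q := 0) (fun i _ => hc i) (by ring) (fun i _ => hs i) (by linarith)
    Set.self_mem_Ici

theorem sum_negMulLog_le_sum_negMulLog_mulVec {ι κ : Type*} [Fintype ι] [Fintype κ]
    {c : Matrix κ ι ℝ} {s : ι → ℝ} (hc : ∀ r i, 0 ≤ c r i) (hs : ∀ i, 0 ≤ s i)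
    (hrow : ∀ r, ∑ i, c r i ≤ 1) (hcol : ∀ i, ∑ r, c r i = 1) :
    ∑ i, negMulLog (s i) ≤ ∑ r, negMulLog ((c *ᵥ s) r) :=
  calc ∑ i, negMulLog (s i) = ∑ i, ∑ r, c r i * negMulLog (s i) := by
        simp only [← Finset.sum_mul, hcol, one_mul]
    _ = ∑ r, ∑ i, c r i * negMulLog (s i) := Finset.sum_comm
    _ ≤ ∑ r, negMulLog ((c *ᵥ s) r) :=
        Finset.sum_le_sum fun r _ => sum_mul_negMulLog_le_negMulLog_sum (hc r) hs (hrow r)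

end Real

namespace Matrix

variable {m m' : Type*}

theorem mul_diagonal_mul_conjTranspose_apply_self [Fintype m] [DecidableEq m]
    (Q : Matrix m' m ℂ) (s : m → ℝ) (j : m') :
    (Q * diagonal (fun k => (s k : ℂ)) * Qᴴ) j j =
      ((∑ k, Complex.normSq (Q j k) * s k : ℝ) : ℂ) := by
  simp only [mul_apply, diagonal_apply, conjTranspose_apply, mul_ite, mul_zero,
    Finset.sum_ite_eq', Finset.mem_univ, if_true, Complex.ofReal_sum, Complex.ofReal_mul,
    Complex.star_def, Complex.normSq_eq_conj_mul_self]
  exact Finset.sum_congr rfl fun k _ => by ring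

theorem mul_conjTranspose_apply_self [Fintype m] (Q : Matrix m' m ℂ) (j : m') :
    (Q * Qᴴ) j j = ((∑ k, Complex.normSq (Q j k) : ℝ) : ℂ) := by
  simp only [mul_apply, conjTranspose_apply, Complex.ofReal_sum, Complex.star_def,
    Complex.mul_conj]

theorem conjTranspose_mul_apply_self [Fintype m'] (Q : Matrix m' m ℂ) (k : m) :
    (Qᴴ * Q) k k = ((∑ j, Complex.normSq (Q j k) : ℝ) : ℂ) := by
  simp only [mul_apply, conjTranspose_apply, Complex.ofReal_sum, Complex.star_def,
    Complex.normSq_eq_conj_mul_self]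

theorem sum_normSq_le_one_of_posSemidef_one_sub [Fintype m] [DecidableEq m']
    {Q : Matrix m' m ℂ} (hQ : (1 - Q * Qᴴ).PosSemidef) (j : m') :
    ∑ k, Complex.normSq (Q j k) ≤ 1 := by
  have := hQ.diag_nonneg (i := j)
  rw [sub_apply, one_apply_eq, mul_conjTranspose_apply_self, ← Complex.ofReal_one,
    ← Complex.ofReal_sub, Complex.zero_le_real] at this
  linarith

theorem posSemidef_one_sub_mul_conjTranspose [Fintype m] [Fintype m'] [DecidableEq m']
    {F : Type*} [Fintype F] {K : F → Matrix m' m ℂ} (hK : ∑ n, K n * (K n)ᴴ = 1) (n : F) :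
    (1 - K n * (K n)ᴴ).PosSemidef := by
  classical
  rw [← hK, ← Finset.sum_erase_eq_sub (Finset.mem_univ n)]
  exact posSemidef_sum _ fun _ _ => posSemidef_self_mul_conjTranspose _

theorem IsHermitian.trace_cfc {𝕜 : Type*} [RCLike 𝕜] [Fintype m] [DecidableEq m]
    {A : Matrix m m 𝕜} (hA : A.IsHermitian) (f : ℝ → ℝ) :
    (cfc f A).trace = ∑ i, (f (hA.eigenvalues i) : 𝕜) := by
  rw [hA.cfc_eq, IsHermitian.cfc, Unitary.conjStarAlgAut_apply, trace_mul_cycle,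
    Unitary.coe_star_mul_self, one_mul, trace_diagonal]
  rfl

end Matrix

section vnEntropy

variable {n : Type*} [Fintype n] [DecidableEq n]

theorem vnEntropy_eq_re_trace_cfc {A : Matrix n n ℂ} (hA : A.IsHermitian) :
    vnEntropy A = (cfc Real.negMulLog A).trace.re := by
  simp [vnEntropy, hA, hA.trace_cfc]

theorem vnEntropy_smul {A : Matrix n n ℂ} (hA : A.IsHermitian) (c : ℝ) :
    vnEntropy (c • A) = c * vnEntropy A + Real.negMulLog c * A.trace.re := by
  have hcfc : cfc Real.negMulLog (c • A) = Real.negMulLog c • A + c • cfc Real.negMulLog A := by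
    rw [← cfc_comp_smul c _ A Real.continuous_negMulLog.continuousOn]
    have hsplit : (fun x => Real.negMulLog (c • x)) =
        fun x => Real.negMulLog c * x + c * Real.negMulLog x := by
      funext x
      rw [smul_eq_mul, Real.negMulLog_mul]
      ring
    rw [hsplit, cfc_add .., cfc_const_mul .., cfc_const_mul .., cfc_id' ℝ A]
  rw [vnEntropy_eq_re_trace_cfc (hA.smul (IsSelfAdjoint.all c)), vnEntropy_eq_re_trace_cfc hA,
    hcfc]
  simp only [trace_add, trace_smul, Complex.add_re, Complex.real_smul, Complex.re_ofReal_mul]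
  ring

theorem vnEntropy_zero : vnEntropy (0 : Matrix n n ℂ) = 0 := by
  rw [vnEntropy, dif_pos isHermitian_zero, isHermitian_zero.eigenvalues_eq_zero_iff.2 rfl]
  simp

theorem vnEntropy_eq_negMulLog_add_mul_vnEntropy_inv_smul {M : Matrix n n ℂ}
    (hM : M.PosSemidef) {t : ℝ} (ht : (t : ℂ) = M.trace) :
    vnEntropy M = Real.negMulLog t + t * vnEntropy (t⁻¹ • M) := by
  rcases eq_or_ne t 0 with rfl | ht0
  · rw [hM.trace_eq_zero_iff.1 (by exact_mod_cast ht.symm)]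
    simp [vnEntropy_zero]
  · have htr : (t⁻¹ • M).trace.re = 1 := by
      rw [trace_smul, ← ht, Complex.real_smul, ← Complex.ofReal_mul, inv_mul_cancel₀ ht0,
        Complex.ofReal_re]
    conv_lhs => rw [← smul_inv_smul₀ ht0 M]
    rw [vnEntropy_smul (hM.1.smul (IsSelfAdjoint.all _)), htr, mul_one, add_comm]

end vnEntropy

theorem sum_negMulLog_le_of_mul_diagonal_mul_conjTranspose {m m' F : Type*} [Fintype m]
    [DecidableEq m] [Fintype m'] [DecidableEq m'] [Fintype F] {s : m → ℝ} (hs : ∀ k, 0 ≤ s k)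
    {g : F → m' → ℝ} {Q : F → Matrix m' m ℂ}
    (hQ_diag : ∀ n, Q n * diagonal (fun k => (s k : ℂ)) * (Q n)ᴴ = diagonal (fun j => (g n j : ℂ)))
    (hQ_row : ∀ n, (1 - Q n * (Q n)ᴴ).PosSemidef) (hQ_col : ∑ n, (Q n)ᴴ * Q n = 1) :
    ∑ k, Real.negMulLog (s k) ≤ ∑ n, ∑ j, Real.negMulLog (g n j) := by
  set c : Matrix (F × m') m ℝ := of fun r k => Complex.normSq (Q r.1 r.2 k)
  have hc_col k : ∑ r, c r k = 1 := by
    have := congr(($hQ_col) k k)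
    simp only [Matrix.sum_apply, one_apply_eq, conjTranspose_mul_apply_self] at this
    rw [Fintype.sum_prod_type]
    exact_mod_cast this
  have hc_mulVec r : (c *ᵥ s) r = g r.1 r.2 := by
    have := congr(($(hQ_diag r.1)) r.2 r.2)
    rw [mul_diagonal_mul_conjTranspose_apply_self, diagonal_apply_eq] at this
    exact_mod_cast this
  calc ∑ k, Real.negMulLog (s k) ≤ ∑ r, Real.negMulLog ((c *ᵥ s) r) :=
        Real.sum_negMulLog_le_sum_negMulLog_mulVec (fun _ _ => Complex.normSq_nonneg _) hs
          (fun r => sum_normSq_le_one_of_posSemidef_one_sub (hQ_row r.1) r.2) hc_col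
    _ = ∑ n, ∑ j, Real.negMulLog (g n j) := by simp only [hc_mulVec, Fintype.sum_prod_type]

theorem vnEntropy_le_sum_vnEntropy_mul_mul_conjTranspose {m m' F : Type*} [Fintype m]
    [DecidableEq m] [Fintype m'] [DecidableEq m'] [Fintype F] {A : Matrix m m ℂ}
    (hA : A.PosSemidef) (K : F → Matrix m' m ℂ) (htp : ∑ n, (K n)ᴴ * K n = 1)
    (hunital : ∑ n, K n * (K n)ᴴ = 1) :
    vnEntropy A ≤ ∑ n, vnEntropy (K n * A * (K n)ᴴ) := by
  have hB n : (K n * A * (K n)ᴴ).IsHermitian := (hA.mul_mul_conjTranspose_same (K n)).1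
  set E : Matrix m m ℂ := ↑hA.1.eigenvectorUnitary
  set W : F → Matrix m' m' ℂ := fun n => ↑(hB n).eigenvectorUnitary
  have hE : E * Eᴴ = 1 := Unitary.coe_mul_star_self _
  have hE' : Eᴴ * E = 1 := Unitary.coe_star_mul_self _
  have hW n : W n * (W n)ᴴ = 1 := Unitary.coe_mul_star_self _
  have hW' n : (W n)ᴴ * W n = 1 := Unitary.coe_star_mul_self _
  simp only [vnEntropy, dif_pos hA.1, dif_pos (hB _)]
  refine sum_negMulLog_le_of_mul_diagonal_mul_conjTranspose hA.eigenvalues_nonneg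
    (Q := fun n => (W n)ᴴ * K n * E) (fun n => ?diag) (fun n => ?row) ?col
  case diag =>
    have hA_eq : A = E * diagonal (fun k => (hA.1.eigenvalues k : ℂ)) * Eᴴ :=
      hA.1.spectral_theorem
    have hB_diag := (hB n).conjStarAlgAut_star_eigenvectorUnitary
    rw [Unitary.conjStarAlgAut_star_apply] at hB_diag
    calc _ = (W n)ᴴ * (K n * (E * diagonal (fun k => (hA.1.eigenvalues k : ℂ)) * Eᴴ) * (K n)ᴴ) *
          W n := by simp only [conjTranspose_mul, conjTranspose_conjTranspose, Matrix.mul_assoc]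
      _ = _ := by rw [← hA_eq]; exact hB_diag
  case row =>
    have hconj : 1 - (W n)ᴴ * K n * E * ((W n)ᴴ * K n * E)ᴴ =
        (W n)ᴴ * (1 - K n * (K n)ᴴ) * W n := by
      simp only [conjTranspose_mul, conjTranspose_conjTranspose, Matrix.mul_sub,
        Matrix.sub_mul, Matrix.mul_one, hW', Matrix.mul_assoc]
      rw [← Matrix.mul_assoc E, hE, Matrix.one_mul]
    rw [hconj]
    exact (posSemidef_one_sub_mul_conjTranspose hunital n).conjTranspose_mul_mul_same _
  case col =>
    calc ∑ n, ((W n)ᴴ * K n * E)ᴴ * ((W n)ᴴ * K n * E) = Eᴴ * (∑ n, (K n)ᴴ * K n) * E := by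
          simp only [conjTranspose_mul, conjTranspose_conjTranspose, Finset.mul_sum,
            Finset.sum_mul, Matrix.mul_assoc]
          refine Finset.sum_congr rfl fun n _ => ?_
          rw [← Matrix.mul_assoc (W n), hW, Matrix.one_mul]
      _ = 1 := by rw [htp, Matrix.mul_one, hE']

theorem avg_entropy_production_ctrl_nonneg_general
    {d : ℕ} {F : Type*} [Fintype F]
    (ρ : Matrix (Fin d) (Fin d) ℂ) (hρ : ρ.PosSemidef)
    (V : Matrix (Fin d) (Fin d) ℂ) (hV : Vᴴ * V = 1) (hV' : V * Vᴴ = 1)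
    (P : F → Matrix (Fin d) (Fin d) ℂ) (hP : ∀ n, (P n).PosSemidef)
    (hPsum : ∑ n, (P n) ^ 2 = 1)
    (σ : Matrix (Fin d) (Fin d) ℂ) (hσ : σ = V * ρ * Vᴴ)
    (p : F → ℝ) (hp : ∀ n, (p n : ℂ) = (P n * σ * P n).trace) :
    0 ≤ shannonEntropy p +
        (∑ n ∈ Finset.univ.filter (fun n => 0 < p n),
          p n * vnEntropy ((p n)⁻¹ • (P n * σ * P n))) - vnEntropy ρ := by
  have hPh n : (P n)ᴴ = P n := (hP n).1
  have hK n : P n * σ * P n = P n * V * ρ * (P n * V)ᴴ := by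
    rw [hσ, conjTranspose_mul, hPh]
    simp only [Matrix.mul_assoc]
  have htp : ∑ n, (P n * V)ᴴ * (P n * V) = 1 :=
    calc ∑ n, (P n * V)ᴴ * (P n * V) = Vᴴ * (∑ n, P n ^ 2) * V := by
          simp only [conjTranspose_mul, hPh, Finset.mul_sum, Finset.sum_mul, sq, Matrix.mul_assoc]
      _ = 1 := by rw [hPsum, Matrix.mul_one, hV]
  have hunital : ∑ n, P n * V * (P n * V)ᴴ = 1 :=
    calc ∑ n, P n * V * (P n * V)ᴴ = ∑ n, P n ^ 2 := Finset.sum_congr rfl fun n _ => by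
          rw [conjTranspose_mul, hPh, Matrix.mul_assoc, ← Matrix.mul_assoc V, hV', Matrix.one_mul,
            sq]
      _ = 1 := hPsum
  have hmono := vnEntropy_le_sum_vnEntropy_mul_mul_conjTranspose hρ _ htp hunital
  simp only [← hK] at hmono
  have hM n : (P n * σ * P n).PosSemidef := hK n ▸ hρ.mul_mul_conjTranspose_same _
  have hp_nonneg n : 0 ≤ p n := Complex.zero_le_real.1 (hp n ▸ (hM n).trace_nonneg)
  simp only [vnEntropy_eq_negMulLog_add_mul_vnEntropy_inv_smul (hM _) (hp _),
    Finset.sum_add_distrib] at hmono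
  rw [shannonEntropy, Finset.sum_filter_of_ne fun n _ h => ?pos]
  · linarith
  case pos => exact (hp_nonneg n).lt_of_ne (left_ne_zero_of_mul h).symm

/-- Positivity of the average entropy production `Σ^ctrl` of a control operation
consisting of a unitary interaction `V` followed by a measurement `{P n}`. -/
theorem avg_entropy_production_ctrl_nonneg
    {d : ℕ} {F : Type*} [Fintype F]
    (ρ : Matrix (Fin d) (Fin d) ℂ) (hρ : ρ.PosSemidef) (hρtr : ρ.trace = 1)
    (V : Matrix (Fin d) (Fin d) ℂ) (hV : Vᴴ * V = 1) (hV' : V * Vᴴ = 1)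
    (P : F → Matrix (Fin d) (Fin d) ℂ) (hP : ∀ n, (P n).PosSemidef)
    (hPsum : ∑ n, (P n) ^ 2 = 1)
    (σ : Matrix (Fin d) (Fin d) ℂ) (hσ : σ = V * ρ * Vᴴ)
    (p : F → ℝ) (hp : ∀ n, (p n : ℂ) = (P n * σ * P n).trace) :
    0 ≤ shannonEntropy p +
        (∑ n ∈ Finset.univ.filter (fun n => 0 < p n),
          p n * vnEntropy ((p n)⁻¹ • (P n * σ * P n))) - vnEntropy ρ :=
  avg_entropy_production_ctrl_nonneg_general ρ hρ V hV hV' P hP hPsum σ hσ p hp
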